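/- The optimal value of the following semidefinite program equals 3/4: maximize ⟨τ, Q⟩ over density matrices τ on Y ⊗ A₀ ⊗ A₁ ⊗ Z = ℂ² ⊗ ℂ³ ⊗ ℂ³ ⊗ ℂ², subject to Tr_Z(τ) = Tr_{B₀,B₁}(|ψ⟩⟨ψ|), where |ψ⟩ = Σ_{y∈{0,1}} (1/√2)|y⟩_Y ⊗ |φ_y⟩_{A₀⊗B₀} ⊗ |φ_y⟩_{A₁⊗B₁} and Q = 1_Y ⊗ 1_{A₀} ⊗ (|0⟩⟨0| + |1⟩⟨1|)_{A₁} ⊗ |0⟩⟨0|_Z + 1_Y ⊗ (|0⟩⟨0| + |1⟩⟨1|)_{A₀} ⊗ 1_{A₁} ⊗ |1⟩⟨1|_Z. (This is the optimal probability with which a cheating Bob forces outcome 0 in the EPR-based weak coin flipping protocol.) -/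

import Mathlib

/-! STATEMENT 3: Bob's optimal cheating probability (forcing outcome 0) in the EPR-based weak coin flipping protocol equals 3/4. -/

open Matrix
open scoped Matrix BigOperators ComplexOrder

noncomputable section

/-- Square matrices over ℂ indexed by `α`. -/
abbrev Mat (α : Type) : Type := Matrix α α ℂ

/-- A density matrix: positive semidefinite with unit trace. -/
def IsDensity {α : Type} [Fintype α] [DecidableEq α] (ρ : Mat α) : Prop :=
  ρ.PosSemidef ∧ ρ.trace = 1

/-- Hilbert–Schmidt inner product ⟨P, Q⟩ = Tr(P† Q). -/
def hs {α : Type} [Fintype α] (P Q : Mat α) : ℂ := (Pᴴ * Q).trace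

/-- Outer product |v⟩⟨v|. -/
def outer {α : Type} (v : α → ℂ) : Mat α := fun i j => v i * star (v j)

/-- Standard basis vector |i⟩. -/
def ket {α : Type} [DecidableEq α] (i : α) : α → ℂ := fun j => if j = i then 1 else 0

/-- The embedding of Fin 2 into Fin 3. -/
def f23 (y : Fin 2) : Fin 3 := ⟨y.val, by omega⟩

/-- |φ_y⟩ = (|yy⟩ + |22⟩)/√2 ∈ ℂ³ ⊗ ℂ³. -/
def phi (y : Fin 2) : Fin 3 × Fin 3 → ℂ :=
  fun p => (ket (f23 y, f23 y) p + ket ((2 : Fin 3), (2 : Fin 3)) p) / (Real.sqrt 2 : ℂ)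

/-- Partial trace over the first tensor factor. -/
def ptrA {α β : Type} [Fintype α] (ρ : Mat (α × β)) : Mat β :=
  fun b b' => ∑ a, ρ (a, b) (a, b')

/-- Index for Y ⊗ A₀ ⊗ B₀ ⊗ A₁ ⊗ B₁. -/
abbrev I5 : Type := Fin 2 × Fin 3 × Fin 3 × Fin 3 × Fin 3

/-- |ψ⟩ = Σ_y (1/√2)|y⟩_Y ⊗ |φ_y⟩_{A₀⊗B₀} ⊗ |φ_y⟩_{A₁⊗B₁}. -/
def psiW : I5 → ℂ := fun p =>
  match p with
  | (y, a0, b0, a1, b1) => phi y (a0, b0) * phi y (a1, b1) / (Real.sqrt 2 : ℂ)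

/-- Partial trace over B₀ and B₁, onto Y ⊗ A₀ ⊗ A₁. -/
def trB01 (ρ : Mat I5) : Mat (Fin 2 × Fin 3 × Fin 3) :=
  fun p q => ∑ b0, ∑ b1,
    ρ (p.1, p.2.1, b0, p.2.2, b1) (q.1, q.2.1, b0, q.2.2, b1)

/-- Partial trace over Z, the last factor of Y ⊗ A₀ ⊗ A₁ ⊗ Z. -/
def trZ (τ : Mat (Fin 2 × Fin 3 × Fin 3 × Fin 2)) : Mat (Fin 2 × Fin 3 × Fin 3) :=
  fun p q => ∑ z, τ (p.1, p.2.1, p.2.2, z) (q.1, q.2.1, q.2.2, z)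

/-- Q = 1_Y ⊗ 1_{A₀} ⊗ (|0⟩⟨0|+|1⟩⟨1|)_{A₁} ⊗ |0⟩⟨0|_Z
      + 1_Y ⊗ (|0⟩⟨0|+|1⟩⟨1|)_{A₀} ⊗ 1_{A₁} ⊗ |1⟩⟨1|_Z. -/
def Qw : Mat (Fin 2 × Fin 3 × Fin 3 × Fin 2) := fun p q =>
  match p, q with
  | (y, a0, a1, z), (y', a0', a1', z') =>
    (if y = y' then 1 else 0) * (if a0 = a0' then 1 else 0) *
      (ket (0 : Fin 3) a1 * star (ket (0 : Fin 3) a1')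
        + ket (1 : Fin 3) a1 * star (ket (1 : Fin 3) a1')) *
      (ket (0 : Fin 2) z * star (ket (0 : Fin 2) z'))
    + (if y = y' then 1 else 0) *
      (ket (0 : Fin 3) a0 * star (ket (0 : Fin 3) a0')
        + ket (1 : Fin 3) a0 * star (ket (1 : Fin 3) a0')) *
      (if a1 = a1' then 1 else 0) *
      (ket (1 : Fin 2) z * star (ket (1 : Fin 2) z'))

/-! The observable `Qw` is diagonal: it gives weight one to `(y, a₀, a₁, z)` exactly when
the register named by `z` (`A₁` for `z = 0`, `A₀` for `z = 1`) is not in state `|2⟩`.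
This weight never exceeds the indicator `w = notBothTwo` of `¬ (a₀ = 2 ∧ a₁ = 2)`, so every feasible `τ`
satisfies `⟨τ, Q⟩ ≤ ⟨Tr_Z τ, w⟩ = ⟨ρ, w⟩ = 1 - ⟨ρ, |22⟩⟨22|⟩ = 1 - 1/4`,
where `ρ = Tr_{B₀B₁} |ψ⟩⟨ψ|`.
The bound is attained by Bob recording `[a₁ = 2]` in `Z` through the isometry
`|x⟩ ↦ |x⟩ |[a₁ = 2]⟩`: as `ρ` is block diagonal in `a₁`, this leaves `Tr_Z` equal to `ρ`,
and on the support of the new state the weight of `Qw` is exactly `w`. -/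

section General

variable {α β : Type} [Fintype α] [DecidableEq α]

lemma re_hs_diagonal (τ : Mat α) (d : α → ℝ) :
    (hs τ (diagonal fun i => (d i : ℂ))).re = ∑ i, d i * (τ i i).re := by
  simp [hs, trace, Complex.re_sum, mul_comm]

def graphIsometry [DecidableEq β] (f : α → β) : Matrix (α × β) α ℂ :=
  fun p x => if p = (x, f x) then 1 else 0

lemma graphIsometry_conj_apply [DecidableEq β] (f : α → β) (ρ : Mat α) (p q : α × β) :
    (graphIsometry f * ρ * (graphIsometry f)ᴴ) p q =
      if p.2 = f p.1 ∧ q.2 = f q.1 then ρ p.1 q.1 else 0 := by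
  simp [graphIsometry, mul_apply, Prod.ext_iff, ite_and, apply_ite (starRingEnd ℂ)]
  split_ifs <;> rfl

end General

abbrev I3 : Type := Fin 2 × Fin 3 × Fin 3

abbrev I4 : Type := Fin 2 × Fin 3 × Fin 3 × Fin 2

lemma sum_I4_eq_sum_sum {M : Type} [AddCommMonoid M] (f : I4 → M) :
    ∑ p, f p = ∑ x : I3, ∑ z, f (x.1, x.2.1, x.2.2, z) := by
  simp only [Fintype.sum_prod_type]

lemma trace_trZ (τ : Mat I4) : (trZ τ).trace = τ.trace := by
  simp [trace, trZ, Fintype.sum_prod_type]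

lemma sum_mul_re_diag_le_trZ {τ : Mat I4} (hτ : τ.PosSemidef) {q : I4 → ℝ} {w : I3 → ℝ}
    (hqw : ∀ x z, q (x.1, x.2.1, x.2.2, z) ≤ w x) :
    ∑ p, q p * (τ p p).re ≤ ∑ x, w x * (trZ τ x x).re := by
  rw [sum_I4_eq_sum_sum]
  refine Finset.sum_le_sum fun x _ => ?_
  rw [trZ, Complex.re_sum, Finset.mul_sum]
  exact Finset.sum_le_sum fun z _ =>
    mul_le_mul_of_nonneg_right (hqw x z) (Complex.nonneg_iff.mp hτ.diag_nonneg).1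

section Observable

def notTwo (a : Fin 3) : ℝ := if a = 2 then 0 else 1

def qWeight (p : I4) : ℝ := if p.2.2.2 = 0 then notTwo p.2.2.1 else notTwo p.2.1

def notBothTwo (x : I3) : ℝ := if x.2.1 = 2 ∧ x.2.2 = 2 then 0 else 1

lemma ket_zero_mul_star_add_ket_one_mul_star (a a' : Fin 3) :
    ket 0 a * star (ket 0 a') + ket 1 a * star (ket 1 a') =
      if a = a' then (notTwo a : ℂ) else 0 := by
  fin_cases a <;> fin_cases a' <;> simp [ket, notTwo]

lemma Qw_eq_diagonal : Qw = diagonal fun p => (qWeight p : ℂ) := by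
  ext ⟨y, a0, a1, z⟩ ⟨y', a0', a1', z'⟩
  simp only [Qw, ket_zero_mul_star_add_ket_one_mul_star, diagonal_apply, qWeight, Prod.ext_iff]
  fin_cases z <;> fin_cases z' <;> simp [ket, ite_and] <;> split_ifs <;> simp_all

lemma qWeight_le_notBothTwo (x : I3) (z : Fin 2) :
    qWeight (x.1, x.2.1, x.2.2, z) ≤ notBothTwo x := by
  unfold qWeight notBothTwo notTwo
  split_ifs <;> simp_all

end Observable

section ReducedState

def phiSupport (y : Fin 2) : Finset (Fin 3) := {f23 y, 2}

lemma f23_ne_two (y : Fin 2) : f23 y ≠ 2 := by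
  fin_cases y <;> decide

lemma phi_apply (y : Fin 2) (a b : Fin 3) :
    phi y (a, b) = if b = a ∧ a ∈ phiSupport y then ((√2 : ℝ) : ℂ)⁻¹ else 0 := by
  have := f23_ne_two y
  simp only [phi, ket, Prod.ext_iff]
  split_ifs <;> simp_all [phiSupport, div_eq_mul_inv]

lemma psiW_apply (y : Fin 2) (a0 b0 a1 b1 : Fin 3) :
    psiW (y, a0, b0, a1, b1) =
      if b1 = a1 ∧ b0 = a0 ∧ a0 ∈ phiSupport y ∧ a1 ∈ phiSupport y
      then ((√2 ^ 3 : ℝ) : ℂ)⁻¹ else 0 := by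
  simp only [psiW, phi_apply]
  split_ifs <;> simp_all
  ring

lemma sqrt_two_pow_three_mul_self : (√2 ^ 3 : ℝ) * √2 ^ 3 = 8 := by
  rw [← pow_add, show 3 + 3 = 2 * 3 from rfl, pow_mul, Real.sq_sqrt (by norm_num)]
  norm_num

lemma trB01_outer_psiW_apply (y y' : Fin 2) (a0 a0' a1 a1' : Fin 3) :
    trB01 (outer psiW) (y, a0, a1) (y', a0', a1') =
      if a1 = a1' ∧ a0 = a0' ∧ (a0 ∈ phiSupport y ∧ a1 ∈ phiSupport y) ∧
        (a0 ∈ phiSupport y' ∧ a1 ∈ phiSupport y') then 1 / 8 else 0 := by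
  have h8 : ((√2 ^ 3 : ℝ) : ℂ)⁻¹ * ((√2 ^ 3 : ℝ) : ℂ)⁻¹ = 1 / 8 := by
    rw [← mul_inv, ← Complex.ofReal_mul, sqrt_two_pow_three_mul_self]; norm_num
  simp only [trB01, outer, psiW_apply, apply_ite star, Complex.star_def, map_zero]
  simp only [ite_and, ite_mul, zero_mul, Fintype.sum_ite_eq']
  split_ifs <;> simp_all

lemma trace_trB01_outer_psiW : (trB01 (outer psiW)).trace = 1 := by
  simp [trace, Fintype.sum_prod_type, Fin.sum_univ_succ, trB01_outer_psiW_apply, phiSupport, f23]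
  norm_num

lemma sum_notBothTwo_mul_trB01_outer_psiW :
    ∑ x, notBothTwo x * (trB01 (outer psiW) x x).re = 3 / 4 := by
  simp [notBothTwo, Fintype.sum_prod_type, Fin.sum_univ_succ, trB01_outer_psiW_apply,
    phiSupport, f23]
  norm_num

lemma trB01_outer_eq_sum (v : I5 → ℂ) :
    trB01 (outer v) =
      ∑ b : Fin 3 × Fin 3, outer fun x : I3 => v (x.1, x.2.1, b.1, x.2.2, b.2) := by
  ext x x'
  simp [trB01, outer, Matrix.sum_apply, Fintype.sum_prod_type]

lemma posSemidef_trB01_outer (v : I5 → ℂ) : (trB01 (outer v)).PosSemidef := by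
  rw [trB01_outer_eq_sum]
  exact posSemidef_sum _ fun _ _ => posSemidef_vecMulVec_self_star _

end ReducedState

section BobStrategy

def bobRecord (a : Fin 3) : Fin 2 := if a = 2 then 1 else 0

lemma qWeight_bobRecord (x : I3) :
    qWeight (x.1, x.2.1, x.2.2, bobRecord x.2.2) = notBothTwo x := by
  unfold qWeight notBothTwo notTwo bobRecord
  split_ifs <;> simp_all

def bobState : Mat I4 :=
  (graphIsometry (fun x : I3 => bobRecord x.2.2) * trB01 (outer psiW) *
    (graphIsometry fun x : I3 => bobRecord x.2.2)ᴴ).submatrix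
    (fun p => ((p.1, p.2.1, p.2.2.1), p.2.2.2)) (fun p => ((p.1, p.2.1, p.2.2.1), p.2.2.2))

lemma bobState_apply (p q : I4) :
    bobState p q = if p.2.2.2 = bobRecord p.2.2.1 ∧ q.2.2.2 = bobRecord q.2.2.1 then
      trB01 (outer psiW) (p.1, p.2.1, p.2.2.1) (q.1, q.2.1, q.2.2.1) else 0 :=
  graphIsometry_conj_apply _ _ ((p.1, p.2.1, p.2.2.1), p.2.2.2) ((q.1, q.2.1, q.2.2.1), q.2.2.2)

lemma posSemidef_bobState : bobState.PosSemidef :=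
  ((posSemidef_trB01_outer psiW).mul_mul_conjTranspose_same _).submatrix _

lemma trZ_bobState : trZ bobState = trB01 (outer psiW) := by
  ext ⟨y, a0, a1⟩ ⟨y', a0', a1'⟩
  rcases eq_or_ne a1 a1' with rfl | h
  · simp [trZ, bobState_apply]
  · simp [trZ, bobState_apply, trB01_outer_psiW_apply, h]

lemma trace_bobState : bobState.trace = 1 := by
  rw [← trace_trZ, trZ_bobState, trace_trB01_outer_psiW]

lemma sum_qWeight_mul_bobState :
    ∑ p, qWeight p * (bobState p p).re = ∑ x, notBothTwo x * (trB01 (outer psiW) x x).re := by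
  rw [sum_I4_eq_sum_sum]
  refine Finset.sum_congr rfl fun x _ => ?_
  simp [bobState_apply, apply_ite Complex.re, mul_ite, qWeight_bobRecord]

end BobStrategy

theorem weak_coin_flipping_cheating_Bob :
    IsGreatest
      {x : ℝ | ∃ τ : Mat (Fin 2 × Fin 3 × Fin 3 × Fin 2),
        IsDensity τ ∧ trZ τ = trB01 (outer psiW) ∧
        x = (hs τ Qw).re}
      (3/4) := by
  have hQ (τ : Mat I4) : (hs τ Qw).re = ∑ p, qWeight p * (τ p p).re := by
    rw [Qw_eq_diagonal, re_hs_diagonal]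
  refine ⟨⟨bobState, ⟨posSemidef_bobState, trace_bobState⟩, trZ_bobState, ?_⟩, ?_⟩
  · rw [hQ, sum_qWeight_mul_bobState, sum_notBothTwo_mul_trB01_outer_psiW]
  · rintro _ ⟨τ, ⟨hτ, -⟩, hρ, rfl⟩
    calc (hs τ Qw).re = ∑ p, qWeight p * (τ p p).re := hQ τ
      _ ≤ ∑ x, notBothTwo x * (trZ τ x x).re :=
        sum_mul_re_diag_le_trZ hτ qWeight_le_notBothTwo
      _ = 3 / 4 := by rw [hρ, sum_notBothTwo_mul_trB01_outer_psiW]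

end
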